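/- arXiv:1204.5628 — 4 statements merged into one kernel-verified Lean document; each statement's English description precedes it below -/
import Mathlib

section
/- Let u : [0,T] × ℝⁿ → ℝ be continuous, and let 0 < t₁ < T. Suppose the restriction of u to [0,t₁] × ℝⁿ is a viscosity solution of u_t + H(t,x,D_x u) = 0 with u(0,·) = σ₁ on (0,t₁) × ℝⁿ, and the restriction of u to [t₁,T] × ℝⁿ is a viscosity solution of the same equation with initial data u(t₁,·) on (t₁,T) × ℝⁿ. Then u is a viscosity solution of u_t + H(t,x,D_x u) = 0 with u(0,·) = σ₁ on the whole domain (0,T) × ℝⁿ. -/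
/-!
Away from `t₁` the viscosity inequalities are those of the two pieces, so everything happens at
`t = t₁`, the right endpoint of the first piece: a subsolution on `(a, b) × ℝⁿ` satisfies the
subsolution inequality also at `t = b`. Otherwise, by continuity, the inequality fails strictly
near the contact point `(b, x₀)`. Maximizing `u - v - (t - b)² - |x - x₀|² - ε / (b - t)` gives a
contact point in `(a, b) × ℝⁿ` close to `(b, x₀)`, and there the barrier only adds
`ε / (b - t)² ≥ 0` to the time derivative of the test function: a contradiction. Supersolutions
follow by the symmetry `u ↦ -u`, `H(t, x, p) ↦ -H(t, x, -p)`.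
-/

open scoped RealInnerProductSpace

noncomputable def timeDeriv {n : ℕ} (v : ℝ × EuclideanSpace ℝ (Fin n) → ℝ)
    (t₀ : ℝ) (x₀ : EuclideanSpace ℝ (Fin n)) : ℝ :=
  deriv (fun t => v (t, x₀)) t₀

noncomputable def spaceGrad {n : ℕ} (v : ℝ × EuclideanSpace ℝ (Fin n) → ℝ)
    (t₀ : ℝ) (x₀ : EuclideanSpace ℝ (Fin n)) : EuclideanSpace ℝ (Fin n) :=
  gradient (fun x => v (t₀, x)) x₀

/-- `u` is a viscosity solution of `u_t + H(t,x,D_x u) = 0`, `u(a,·) = σ`, on `(a,b) × ℝⁿ`. -/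
def IsViscositySolution {n : ℕ} (a b : ℝ)
    (H : ℝ → EuclideanSpace ℝ (Fin n) → EuclideanSpace ℝ (Fin n) → ℝ)
    (σ : EuclideanSpace ℝ (Fin n) → ℝ)
    (u : ℝ → EuclideanSpace ℝ (Fin n) → ℝ) : Prop :=
  ContinuousOn (fun p : ℝ × EuclideanSpace ℝ (Fin n) => u p.1 p.2)
      (Set.Icc a b ×ˢ Set.univ) ∧
  (∀ x, u a x = σ x) ∧
  ∀ v : ℝ × EuclideanSpace ℝ (Fin n) → ℝ, ContDiff ℝ 1 v →
    ∀ t₀ ∈ Set.Ioo a b, ∀ x₀,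
      (IsLocalMax (fun p : ℝ × EuclideanSpace ℝ (Fin n) => u p.1 p.2 - v p) (t₀, x₀) →
        timeDeriv v t₀ x₀ + H t₀ x₀ (spaceGrad v t₀ x₀) ≤ 0) ∧
      (IsLocalMin (fun p : ℝ × EuclideanSpace ℝ (Fin n) => u p.1 p.2 - v p) (t₀, x₀) →
        0 ≤ timeDeriv v t₀ x₀ + H t₀ x₀ (spaceGrad v t₀ x₀))

open Set Filter Topology InnerProductSpace

section TimeSpaceDerivatives

variable {n : ℕ}

local notation "E" => EuclideanSpace ℝ (Fin n)

lemma hasDerivAt_timeSlice {v : ℝ × E → ℝ} (hv : ContDiff ℝ 1 v) (t : ℝ) (x : E) :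
    HasDerivAt (fun s => v (s, x)) (fderiv ℝ v (t, x) (1, 0)) t :=
  ((hv.differentiable one_ne_zero (t, x)).hasFDerivAt).comp_hasDerivAt t
    ((hasDerivAt_id t).prodMk (hasDerivAt_const t x))

lemma timeDeriv_eq_fderiv {v : ℝ × E → ℝ} (hv : ContDiff ℝ 1 v) (t : ℝ) (x : E) :
    timeDeriv v t x = fderiv ℝ v (t, x) (1, 0) :=
  (hasDerivAt_timeSlice hv t x).deriv

lemma continuous_timeDeriv {v : ℝ × E → ℝ} (hv : ContDiff ℝ 1 v) :
    Continuous fun p : ℝ × E => timeDeriv v p.1 p.2 := by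
  simp only [timeDeriv_eq_fderiv hv]
  exact (hv.continuous_fderiv one_ne_zero).clm_apply continuous_const

lemma hasFDerivAt_spaceSlice {v : ℝ × E → ℝ} (hv : ContDiff ℝ 1 v) (t : ℝ) (x : E) :
    HasFDerivAt (fun y => v (t, y)) ((fderiv ℝ v (t, x)).comp (.inr ℝ ℝ E)) x :=
  ((hv.differentiable one_ne_zero (t, x)).hasFDerivAt).comp x
    ((hasFDerivAt_const t x).prodMk (hasFDerivAt_id x))

lemma hasGradientAt_spaceGrad {v : ℝ × E → ℝ} (hv : ContDiff ℝ 1 v) (t : ℝ) (x : E) :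
    HasGradientAt (fun y => v (t, y)) (spaceGrad v t x) x :=
  (hasFDerivAt_spaceSlice hv t x).differentiableAt.hasGradientAt

lemma continuous_spaceGrad {v : ℝ × E → ℝ} (hv : ContDiff ℝ 1 v) :
    Continuous fun p : ℝ × E => spaceGrad v p.1 p.2 := by
  simp only [spaceGrad, gradient, (hasFDerivAt_spaceSlice hv _ _).fderiv]
  exact (toDual ℝ E).symm.continuous.comp
    ((hv.continuous_fderiv one_ne_zero).clm_comp continuous_const)

lemma timeDeriv_neg (v : ℝ × E → ℝ) (t : ℝ) (x : E) :
    timeDeriv (fun p => -v p) t x = -timeDeriv v t x :=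
  deriv.neg

lemma spaceGrad_neg (v : ℝ × E → ℝ) (t : ℝ) (x : E) :
    spaceGrad (fun p => -v p) t x = -spaceGrad v t x := by
  simp only [spaceGrad, gradient, fderiv_fun_neg, map_neg]

lemma timeDeriv_add_add {v : ℝ × E → ℝ} (hv : ContDiff ℝ 1 v) {P : ℝ → ℝ} {P' t : ℝ}
    (hP : HasDerivAt P P' t) (G : E → ℝ) (x : E) :
    timeDeriv (fun p => v p + P p.1 + G p.2) t x = timeDeriv v t x + P' := by
  rw [timeDeriv_eq_fderiv hv]
  exact (((hasDerivAt_timeSlice hv t x).add hP).add_const (G x)).deriv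

lemma spaceGrad_add_add {v : ℝ × E → ℝ} (hv : ContDiff ℝ 1 v) (P : ℝ → ℝ) {G : E → ℝ}
    {G' x : E} (hG : HasGradientAt G G' x) (t : ℝ) :
    spaceGrad (fun p => v p + P p.1 + G p.2) t x = spaceGrad v t x + G' := by
  have hv' := hasGradientAt_iff_hasFDerivAt.mp (hasGradientAt_spaceGrad hv t x)
  refine HasGradientAt.gradient (hasGradientAt_iff_hasFDerivAt.mpr ?_)
  rw [map_add]
  exact (hv'.add_const (P t)).add (hasGradientAt_iff_hasFDerivAt.mp hG)

lemma hasGradientAt_norm_sub_sq (x₀ x : E) :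
    HasGradientAt (fun y => ‖y - x₀‖ ^ 2) ((2 : ℝ) • (x - x₀)) x := by
  refine hasGradientAt_iff_hasFDerivAt.mpr
    (((hasFDerivAt_id x).sub_const x₀).norm_sq.congr_fderiv ?_)
  ext w
  simp

end TimeSpaceDerivatives

lemma div_sub_le_quadratic {ε b t' t : ℝ} (hε : 0 ≤ ε) (ht' : t' < b)
    (ht : (b - t') / 2 ≤ b - t) :
    ε / (b - t) ≤
      ε / (b - t') + ε / (b - t') ^ 2 * (t - t') + 2 * ε / (b - t') ^ 3 * (t - t') ^ 2 := by
  have hd : 0 < b - t' := sub_pos.mpr ht'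
  have he : 0 < b - t := by linarith
  have htaylor : ε / (b - t) = ε / (b - t') + ε / (b - t') ^ 2 * (t - t')
      + ε * (t - t') ^ 2 / ((b - t) * (b - t') ^ 2) := by
    field_simp
    ring
  have hrem : ε * (t - t') ^ 2 / ((b - t) * (b - t') ^ 2)
      ≤ ε * (t - t') ^ 2 / ((b - t') / 2 * (b - t') ^ 2) :=
    div_le_div_of_nonneg_left (by positivity) (by positivity)
      (mul_le_mul_of_nonneg_right ht (by positivity))
  have hrem' : ε * (t - t') ^ 2 / ((b - t') / 2 * (b - t') ^ 2)
      = 2 * ε / (b - t') ^ 3 * (t - t') ^ 2 := by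
    field_simp
  linarith

lemma hasDerivAt_quadratic (c₀ c₁ c₂ t' : ℝ) :
    HasDerivAt (fun t => c₀ + c₁ * (t - t') + c₂ * (t - t') ^ 2) c₁ t' := by
  have hlin := ((hasDerivAt_id' t').sub_const t').const_mul c₁
  have hsq := (((hasDerivAt_id' t').sub_const t').fun_pow 2).const_mul c₂
  exact ((hlin.const_add c₀).fun_add hsq).congr_deriv (by simp)

lemma exists_isMaxOn_sub_div {X : Type*} [TopologicalSpace X] {g : ℝ × X → ℝ} {K : Set X}
    (hK : IsCompact K) {c b ε M : ℝ} (hε : 0 < ε) (hg : ContinuousOn g (Ico c b ×ˢ K))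
    (hM : ∀ p ∈ Ico c b ×ˢ K, g p ≤ M) {q : ℝ × X} (hq : q ∈ Ico c b ×ˢ K) :
    ∃ p ∈ Ico c b ×ˢ K, IsMaxOn (fun p => g p - ε / (b - p.1)) (Ico c b ×ˢ K) p := by
  set Φ : ℝ × X → ℝ := fun p => g p - ε / (b - p.1)
  have hbq : 0 < b - q.1 := sub_pos.mpr hq.1.2
  have hgap : 0 < M - Φ q + 1 := by
    have := hM q hq
    have : 0 < ε / (b - q.1) := by positivity
    simp only [Φ]
    linarith
  -- near `t = b` the barrier alone pushes `Φ` below `Φ q`, so we may cut off a strip `(b - r, b)`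
  set r := min (b - q.1) (ε / (M - Φ q + 1))
  have hr : 0 < r := lt_min hbq (by positivity)
  have hrq : q.1 ≤ b - r := by linarith [min_le_left (b - q.1) (ε / (M - Φ q + 1))]
  have hbarrier : M - Φ q + 1 ≤ ε / r :=
    (le_div_iff₀ hr).mpr (by
      have := (le_div_iff₀ hgap).mp (min_le_right (b - q.1) (ε / (M - Φ q + 1)))
      linarith)
  have hsub : Icc c (b - r) ×ˢ K ⊆ Ico c b ×ˢ K :=
    prod_mono (Icc_subset_Ico_right (by linarith)) le_rfl
  have hΦ : ContinuousOn Φ (Icc c (b - r) ×ˢ K) :=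
    (hg.mono hsub).sub (continuousOn_const.div (continuous_const.sub continuous_fst).continuousOn
      fun p hp => by linarith [hp.1.2])
  obtain ⟨p, hp, hpmax⟩ := (isCompact_Icc.prod hK).exists_isMaxOn
    ⟨q, ⟨hq.1.1, hrq⟩, hq.2⟩ hΦ
  refine ⟨p, hsub hp, fun p' hp' => ?_⟩
  by_cases hp'r : p'.1 ≤ b - r
  · exact hpmax ⟨⟨hp'.1.1, hp'r⟩, hp'.2⟩
  · have hbp' : 0 < b - p'.1 := sub_pos.mpr hp'.1.2
    have : ε / r < ε / (b - p'.1) := div_lt_div_of_pos_left hε hbp' (by linarith)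
    have : Φ q ≤ Φ p := hpmax ⟨⟨hq.1.1, hrq⟩, hq.2⟩
    show Φ p' ≤ Φ p
    linarith [hM p' hp']

lemma exists_isLocalMax_penalized {F : Type*} [NormedAddCommGroup F] [ProperSpace F]
    {f : ℝ × F → ℝ} {a b : ℝ} (hab : a < b) (hf : ContinuousOn f (Icc a b ×ˢ univ)) {x₀ : F}
    (hmax : IsLocalMax f (b, x₀)) {ρ : ℝ} (hρ : 0 < ρ) :
    ∃ ε > 0, ∃ t' ∈ Ioo a b, ∃ x', dist (t', x') (b, x₀) < ρ ∧
      IsLocalMax (fun p : ℝ × F => f p - (p.1 - b) ^ 2 - ‖p.2 - x₀‖ ^ 2 - ε / (b - p.1))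
        (t', x') := by
  obtain ⟨δ₀, hδ₀, hfle⟩ := Metric.eventually_nhds_iff.mp hmax
  set δ := min (min ((b - a) / 2) (ρ / 2)) (δ₀ / 2)
  have hδ : 0 < δ := lt_min (lt_min (by linarith) (by linarith)) (by linarith)
  have hδa : δ ≤ (b - a) / 2 := (min_le_left _ _).trans (min_le_left _ _)
  have hδρ : δ ≤ ρ / 2 := (min_le_left _ _).trans (min_le_right _ _)
  have hδδ₀ : δ ≤ δ₀ / 2 := min_le_right _ _
  set M := f (b, x₀)
  have hslice : Tendsto (fun t => f (t, x₀)) (𝓝[<] b) (𝓝 M) :=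
    ((hf.comp (continuous_id.prodMk continuous_const).continuousOn fun _ ht => ⟨ht, mem_univ _⟩)
      b ⟨hab.le, le_rfl⟩).mono_of_mem_nhdsWithin (Icc_mem_nhdsLT hab)
  obtain ⟨s, hfs, hs⟩ := ((hslice.eventually (lt_mem_nhds (show M - δ ^ 2 / 8 < M by
    have := pow_pos hδ 2; linarith))).and (Ioo_mem_nhdsLT (show b - δ / 2 < b by linarith))).exists
  set ε := (b - s) * (δ ^ 2 / 8)
  have hε : 0 < ε := mul_pos (by linarith [hs.2]) (by positivity)
  set S := Ico (b - δ) b ×ˢ Metric.closedBall x₀ δ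
  have hS : ∀ p ∈ S, p ∈ Icc a b ×ˢ univ ∧ dist p (b, x₀) ≤ δ := fun p hp =>
    ⟨⟨⟨by linarith [hp.1.1], hp.1.2.le⟩, mem_univ _⟩, Prod.dist_eq.trans_le <| max_le
      (by rw [Real.dist_eq, abs_sub_comm, abs_of_pos (by linarith [hp.1.2])]; linarith [hp.1.1])
      (Metric.mem_closedBall.mp hp.2)⟩
  have hsS : (s, x₀) ∈ S := ⟨⟨by linarith [hs.1], hs.2⟩, Metric.mem_closedBall_self hδ.le⟩
  obtain ⟨⟨t', x'⟩, hp, hpmax⟩ := exists_isMaxOn_sub_div (isCompact_closedBall x₀ δ) hε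
    (g := fun p => f p - (p.1 - b) ^ 2 - ‖p.2 - x₀‖ ^ 2) (M := M)
    (((hf.mono fun p hp => (hS p hp).1).sub (by fun_prop)).sub (by fun_prop))
    (fun p hp => by
      have := hfle ((hS p hp).2.trans_lt (by linarith))
      nlinarith [sq_nonneg (p.1 - b), sq_nonneg ‖p.2 - x₀‖]) hsS
  have hclose : (t' - b) ^ 2 + ‖x' - x₀‖ ^ 2 < δ ^ 2 := by
    have hval := hpmax hsS
    have hbs : ε / (b - s) = δ ^ 2 / 8 := by
      rw [div_eq_iff (by linarith [hs.2])]
      ring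
    have hbt : 0 < ε / (b - t') := div_pos hε (by linarith [hp.1.2])
    have hsb : (s - b) ^ 2 ≤ δ ^ 2 / 4 := by nlinarith [hs.1, hs.2]
    have := hfle ((hS _ hp).2.trans_lt (by linarith))
    simp only [mem_ofPred_eq, sub_self, norm_zero, hbs] at hval
    nlinarith
  have ht'b : |t' - b| < δ := abs_lt_of_sq_lt_sq (by nlinarith [sq_nonneg ‖x' - x₀‖]) hδ.le
  have hx' : ‖x' - x₀‖ < δ :=
    (pow_lt_pow_iff_left₀ (norm_nonneg _) hδ.le two_ne_zero).mp (by nlinarith [sq_nonneg (t' - b)])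
  refine ⟨ε, hε, t', ⟨by linarith [(abs_lt.mp ht'b).1], hp.1.2⟩, x', ?_, hpmax.isLocalMax ?_⟩
  · rw [Prod.dist_eq, Real.dist_eq, dist_eq_norm]
    exact max_lt (by linarith) (by linarith)
  · refine mem_nhds_iff.mpr ⟨Ioo (b - δ) b ×ˢ Metric.ball x₀ δ,
      prod_mono Ioo_subset_Ico_self Metric.ball_subset_closedBall,
      isOpen_Ioo.prod Metric.isOpen_ball, ⟨?_, hp.1.2⟩, ?_⟩
    · linarith [(abs_lt.mp ht'b).1]
    · rwa [Metric.mem_ball, dist_eq_norm]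

section ViscosityInequalities

variable {n : ℕ}

local notation "E" => EuclideanSpace ℝ (Fin n)

def ViscositySubsolutionOn (I : Set ℝ) (H : ℝ → E → E → ℝ) (u : ℝ → E → ℝ) : Prop :=
  ∀ v : ℝ × E → ℝ, ContDiff ℝ 1 v → ∀ t₀ ∈ I, ∀ x₀,
    IsLocalMax (fun p : ℝ × E => u p.1 p.2 - v p) (t₀, x₀) →
      timeDeriv v t₀ x₀ + H t₀ x₀ (spaceGrad v t₀ x₀) ≤ 0

def ViscositySupersolutionOn (I : Set ℝ) (H : ℝ → E → E → ℝ) (u : ℝ → E → ℝ) : Prop :=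
  ∀ v : ℝ × E → ℝ, ContDiff ℝ 1 v → ∀ t₀ ∈ I, ∀ x₀,
    IsLocalMin (fun p : ℝ × E => u p.1 p.2 - v p) (t₀, x₀) →
      0 ≤ timeDeriv v t₀ x₀ + H t₀ x₀ (spaceGrad v t₀ x₀)

lemma isViscositySolution_iff {a b : ℝ} {H : ℝ → E → E → ℝ} {σ : E → ℝ} {u : ℝ → E → ℝ} :
    IsViscositySolution a b H σ u ↔
      ContinuousOn (fun p : ℝ × E => u p.1 p.2) (Icc a b ×ˢ univ) ∧ (∀ x, u a x = σ x) ∧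
        ViscositySubsolutionOn (Ioo a b) H u ∧ ViscositySupersolutionOn (Ioo a b) H u := by
  simp only [IsViscositySolution, ViscositySubsolutionOn, ViscositySupersolutionOn,
    ← forall_and]

variable {I J : Set ℝ} {H : ℝ → EuclideanSpace ℝ (Fin n) → EuclideanSpace ℝ (Fin n) → ℝ}
  {u : ℝ → EuclideanSpace ℝ (Fin n) → ℝ}

lemma ViscositySubsolutionOn.union (hI : ViscositySubsolutionOn I H u)
    (hJ : ViscositySubsolutionOn J H u) : ViscositySubsolutionOn (I ∪ J) H u :=
  fun v hv t₀ ht₀ => ht₀.elim (hI v hv t₀) (hJ v hv t₀)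

lemma ViscositySupersolutionOn.union (hI : ViscositySupersolutionOn I H u)
    (hJ : ViscositySupersolutionOn J H u) : ViscositySupersolutionOn (I ∪ J) H u :=
  fun v hv t₀ ht₀ => ht₀.elim (hI v hv t₀) (hJ v hv t₀)

lemma ViscositySubsolutionOn.mono (h : ViscositySubsolutionOn I H u) (hJI : J ⊆ I) :
    ViscositySubsolutionOn J H u :=
  fun v hv t₀ ht₀ => h v hv t₀ (hJI ht₀)

lemma ViscositySupersolutionOn.mono (h : ViscositySupersolutionOn I H u) (hJI : J ⊆ I) :
    ViscositySupersolutionOn J H u :=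
  fun v hv t₀ ht₀ => h v hv t₀ (hJI ht₀)

lemma viscositySupersolutionOn_iff_neg :
    ViscositySupersolutionOn I H u ↔
      ViscositySubsolutionOn I (fun t x q => -H t x (-q)) (fun t x => -u t x) := by
  constructor
  · intro h v hv t₀ ht₀ x₀ hmax
    have := h _ hv.neg t₀ ht₀ x₀ (by simpa [sub_eq_add_neg, add_comm] using hmax.neg)
    rw [timeDeriv_neg, spaceGrad_neg] at this
    linarith
  · intro h v hv t₀ ht₀ x₀ hmin
    have := h _ hv.neg t₀ ht₀ x₀ (by simpa [sub_eq_add_neg, add_comm] using hmin.neg)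
    rw [timeDeriv_neg, spaceGrad_neg] at this
    simp only [neg_neg] at this
    linarith

end ViscosityInequalities

section TerminalTime

variable {n : ℕ} {a b : ℝ} {H : ℝ → EuclideanSpace ℝ (Fin n) → EuclideanSpace ℝ (Fin n) → ℝ}
  {u : ℝ → EuclideanSpace ℝ (Fin n) → ℝ}

local notation "E" => EuclideanSpace ℝ (Fin n)

lemma ViscositySubsolutionOn.at_right_endpoint (h : ViscositySubsolutionOn (Ioo a b) H u)
    (hab : a < b) (hH : Continuous fun p : ℝ × E × E => H p.1 p.2.1 p.2.2)
    (hu : ContinuousOn (fun p : ℝ × E => u p.1 p.2) (Icc a b ×ˢ univ))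
    {v : ℝ × E → ℝ} (hv : ContDiff ℝ 1 v) {x₀ : E}
    (hmax : IsLocalMax (fun p : ℝ × E => u p.1 p.2 - v p) (b, x₀)) :
    timeDeriv v b x₀ + H b x₀ (spaceGrad v b x₀) ≤ 0 := by
  by_contra! hpos
  set F : ℝ × E → ℝ := fun p => timeDeriv v p.1 p.2 + 2 * (p.1 - b) +
    H p.1 p.2 (spaceGrad v p.1 p.2 + (2 : ℝ) • (p.2 - x₀))
  have hF : Continuous F := by
    have hargs : Continuous fun p : ℝ × E =>
        (p.1, p.2, spaceGrad v p.1 p.2 + (2 : ℝ) • (p.2 - x₀)) :=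
      continuous_fst.prodMk (continuous_snd.prodMk ((continuous_spaceGrad hv).add
        ((continuous_snd.sub continuous_const).const_smul (2 : ℝ))))
    exact ((continuous_timeDeriv hv).add (by fun_prop)).add (hH.comp hargs)
  obtain ⟨ρ, hρ, hFpos⟩ := Metric.eventually_nhds_iff.mp
    (hF.continuousAt.eventually (lt_mem_nhds (show 0 < F (b, x₀) by simpa [F] using hpos)))
  obtain ⟨ε, hε, t', ht', x', hdist, hloc⟩ :=
    exists_isLocalMax_penalized hab (hu.sub hv.continuous.continuousOn) hmax hρ
  have hd : 0 < b - t' := sub_pos.mpr ht'.2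
  set P : ℝ → ℝ := fun t => (t - b) ^ 2 +
    (ε / (b - t') + ε / (b - t') ^ 2 * (t - t') + 2 * ε / (b - t') ^ 3 * (t - t') ^ 2)
  set w : ℝ × E → ℝ := fun p => v p + P p.1 + ‖p.2 - x₀‖ ^ 2
  have hw : ContDiff ℝ 1 w :=
    (hv.add (by fun_prop)).add ((contDiff_norm_sq ℝ).comp (contDiff_snd.sub contDiff_const))
  -- `P` majorizes `(t - b)² + ε / (b - t)` near `t'`, with equality at `t'`
  have hwmax : IsLocalMax (fun p : ℝ × E => u p.1 p.2 - w p) (t', x') := by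
    have hnear : ∀ᶠ p : ℝ × E in 𝓝 (t', x'), (b - t') / 2 ≤ b - p.1 :=
      (continuous_const.sub continuous_fst).continuousAt.eventually
        (le_mem_nhds (show (b - t') / 2 < b - t' by linarith))
    filter_upwards [hloc, hnear] with p hp hpd
    have := div_sub_le_quadratic hε.le ht'.2 hpd
    simp only [w, P, Pi.sub_apply, sub_self, zero_pow two_ne_zero, mul_zero, add_zero] at hp ⊢
    linarith
  have hP : HasDerivAt P (2 * (t' - b) + ε / (b - t') ^ 2) t' :=
    ((((hasDerivAt_id' t').sub_const b).fun_pow 2).fun_add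
      (hasDerivAt_quadratic _ _ _ t')).congr_deriv (by simp)
  have hwt : timeDeriv w t' x' = timeDeriv v t' x' + (2 * (t' - b) + ε / (b - t') ^ 2) :=
    timeDeriv_add_add hv hP (fun y => ‖y - x₀‖ ^ 2) x'
  have hwx : spaceGrad w t' x' = spaceGrad v t' x' + (2 : ℝ) • (x' - x₀) :=
    spaceGrad_add_add hv P (hasGradientAt_norm_sub_sq x₀ x') t'
  have hvisc := h w hw t' ht' x' hwmax
  rw [hwt, hwx] at hvisc
  have := hFpos hdist
  have : 0 < ε / (b - t') ^ 2 := by positivity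
  simp only [F] at *
  linarith

lemma ViscositySubsolutionOn.Ioc_of_Ioo (h : ViscositySubsolutionOn (Ioo a b) H u)
    (hab : a < b) (hH : Continuous fun p : ℝ × E × E => H p.1 p.2.1 p.2.2)
    (hu : ContinuousOn (fun p : ℝ × E => u p.1 p.2) (Icc a b ×ˢ univ)) :
    ViscositySubsolutionOn (Ioc a b) H u := by
  intro v hv t₀ ht₀ x₀ hmax
  rcases ht₀.2.lt_or_eq with ht₀b | rfl
  · exact h v hv t₀ ⟨ht₀.1, ht₀b⟩ x₀ hmax
  · exact h.at_right_endpoint hab hH hu hv hmax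

lemma ViscositySupersolutionOn.Ioc_of_Ioo (h : ViscositySupersolutionOn (Ioo a b) H u)
    (hab : a < b) (hH : Continuous fun p : ℝ × E × E => H p.1 p.2.1 p.2.2)
    (hu : ContinuousOn (fun p : ℝ × E => u p.1 p.2) (Icc a b ×ˢ univ)) :
    ViscositySupersolutionOn (Ioc a b) H u := by
  rw [viscositySupersolutionOn_iff_neg] at h ⊢
  have hflip : Continuous fun p : ℝ × E × E => (p.1, p.2.1, -p.2.2) := by fun_prop
  exact h.Ioc_of_Ioo hab (hH.comp hflip).neg hu.neg

end TerminalTime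

theorem stmt0_general {n : ℕ} (T t₁ : ℝ) (ht₁ : 0 < t₁)
    (H : ℝ → EuclideanSpace ℝ (Fin n) → EuclideanSpace ℝ (Fin n) → ℝ)
    (hH : Continuous fun p : ℝ × EuclideanSpace ℝ (Fin n) × EuclideanSpace ℝ (Fin n) =>
      H p.1 p.2.1 p.2.2)
    (σ₁ : EuclideanSpace ℝ (Fin n) → ℝ)
    (u : ℝ → EuclideanSpace ℝ (Fin n) → ℝ)
    (hu : ContinuousOn (fun p : ℝ × EuclideanSpace ℝ (Fin n) => u p.1 p.2)
      (Set.Icc 0 T ×ˢ Set.univ))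
    (h1 : IsViscositySolution 0 t₁ H σ₁ u)
    (h2 : IsViscositySolution t₁ T H (u t₁) u) :
    IsViscositySolution 0 T H σ₁ u := by
  rw [isViscositySolution_iff] at h1 h2 ⊢
  obtain ⟨hu₁, hinit, hsub₁, hsuper₁⟩ := h1
  obtain ⟨-, -, hsub₂, hsuper₂⟩ := h2
  exact ⟨hu, hinit,
    ((hsub₁.Ioc_of_Ioo ht₁ hH hu₁).union hsub₂).mono Ioo_subset_Ioc_union_Ioo,
    ((hsuper₁.Ioc_of_Ioo ht₁ hH hu₁).union hsuper₂).mono Ioo_subset_Ioc_union_Ioo⟩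

/-- Gluing two viscosity solutions at `t₁` gives a layered viscosity solution on `(0,T)`. -/
theorem stmt0 {n : ℕ} (T t₁ : ℝ) (ht₁ : 0 < t₁) (h1T : t₁ < T)
    (H : ℝ → EuclideanSpace ℝ (Fin n) → EuclideanSpace ℝ (Fin n) → ℝ)
    (hH : Continuous fun p : ℝ × EuclideanSpace ℝ (Fin n) × EuclideanSpace ℝ (Fin n) =>
      H p.1 p.2.1 p.2.2)
    (σ₁ : EuclideanSpace ℝ (Fin n) → ℝ) (hσ : Continuous σ₁)
    (u : ℝ → EuclideanSpace ℝ (Fin n) → ℝ)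
    (hu : ContinuousOn (fun p : ℝ × EuclideanSpace ℝ (Fin n) => u p.1 p.2)
      (Set.Icc 0 T ×ˢ Set.univ))
    (h1 : IsViscositySolution 0 t₁ H σ₁ u)
    (h2 : IsViscositySolution t₁ T H (u t₁) u) :
    IsViscositySolution 0 T H σ₁ u :=
  stmt0_general T t₁ ht₁ H hH σ₁ u hu h1 h2
end

section
/- Let σ : ℝⁿ → ℝ be convex and Lipschitz, let H : [0,T] × ℝⁿ → ℝ be continuous, let D = dom σ* (a bounded set), and set M = sup_{τ ∈ [0,T], p ∈ D} |H_t(τ,p)| assuming H ∈ C¹ with this supremum finite. Define u(t,x) = max_{q ∈ D} (⟨x,q⟩ − σ*(q) − ∫₀^t H(τ,q)dτ). Then for all (t₁,x₁), (t₂,x₂) ∈ [0,T] × ℝⁿ and λ ∈ [0,1], u(λ(t₁,x₁) + (1−λ)(t₂,x₂)) ≤ λ u(t₁,x₁) + (1−λ) u(t₂,x₂) + λ(1−λ) M |t₁ − t₂|². In particular u is semiconvex with linear modulus on [0,T] × ℝⁿ. -/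
open scoped RealInnerProductSpace

/-- Effective domain of the Fenchel conjugate of `σ`. -/
def fenchelDom {n : ℕ} (σ : EuclideanSpace ℝ (Fin n) → ℝ) :
    Set (EuclideanSpace ℝ (Fin n)) :=
  {q | BddAbove (Set.range fun x => ⟪x, q⟫ - σ x)}

/-- The Fenchel conjugate (as a real supremum; used on its effective domain). -/
noncomputable def fenchelConj {n : ℕ} (σ : EuclideanSpace ℝ (Fin n) → ℝ)
    (q : EuclideanSpace ℝ (Fin n)) : ℝ :=
  ⨆ x, (⟪x, q⟫ - σ x)

/-- The Hopf-type formula `u(t,x) = max_{q ∈ dom σ*} (⟨x,q⟩ − σ*(q) − ∫₀ᵗ H(τ,q)dτ)`. -/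
noncomputable def hopfU {n : ℕ} (σ : EuclideanSpace ℝ (Fin n) → ℝ)
    (H : ℝ → EuclideanSpace ℝ (Fin n) → ℝ) (t : ℝ) (x : EuclideanSpace ℝ (Fin n)) : ℝ :=
  sSup {r : ℝ | ∃ q ∈ fenchelDom σ,
    r = ⟪x, q⟫ - fenchelConj σ q - ∫ τ in (0:ℝ)..t, H τ q}

/-!
For each `q ∈ dom σ*` the function `(t, x) ↦ ⟪x, q⟫ - σ*(q) - ∫₀ᵗ H(τ, q) dτ` is affine in `x`,
and in `t` it becomes convex after adding `M t² / 2`, because its second `t`-derivative is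
`-H_t(t, q) ≥ -M`. Hence each such function satisfies the semiconvexity inequality with modulus
`λ(1-λ)(M/2)|t₁ - t₂|²`, and this inequality survives taking the supremum over `q`. Convexity and
the Lipschitz bound make this supremum well behaved: `dom σ*` is nonempty (it contains the
gradient of `σ` at any point of differentiability, which exists by Rademacher's theorem) and lies
in the ball of radius `L`, so the supremum is finite.
-/

open Set Filter

theorem csSup_image_le_mul_add_mul_add {ι : Type*} {S : Set ι} (hS : S.Nonempty)
    {f g h : ι → ℝ} (hg : BddAbove (g '' S)) (hh : BddAbove (h '' S)) {a b e : ℝ}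
    (ha : 0 ≤ a) (hb : 0 ≤ b) (hfgh : ∀ i ∈ S, f i ≤ a * g i + b * h i + e) :
    sSup (f '' S) ≤ a * sSup (g '' S) + b * sSup (h '' S) + e :=
  csSup_le (hS.image f) <| forall_mem_image.2 fun i hi => (hfgh i hi).trans <| by
    gcongr
    exacts [le_csSup hg (mem_image_of_mem g hi), le_csSup hh (mem_image_of_mem h hi)]

theorem ConvexOn.le_convex_comb_add_of_mul_sq_add {s : Set ℝ} {g : ℝ → ℝ} {a : ℝ}
    (hg : ConvexOn ℝ s fun t => a * t ^ 2 + g t) {t₁ t₂ : ℝ} (ht₁ : t₁ ∈ s) (ht₂ : t₂ ∈ s)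
    {lam : ℝ} (hlam : lam ∈ Icc (0 : ℝ) 1) :
    g (lam * t₁ + (1 - lam) * t₂) ≤
      lam * g t₁ + (1 - lam) * g t₂ + lam * (1 - lam) * a * (t₁ - t₂) ^ 2 := by
  have h := hg.2 ht₁ ht₂ hlam.1 (sub_nonneg.2 hlam.2) (by ring)
  simp only [smul_eq_mul] at h
  linear_combination h

theorem convexOn_half_mul_sq_add_neg_integral {D : Set ℝ} (hD : Convex ℝ D) {h : ℝ → ℝ}
    (hh : Differentiable ℝ h) {M : ℝ} (hM : ∀ τ ∈ interior D, deriv h τ ≤ M) (c : ℝ) :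
    ConvexOn ℝ D fun t => M / 2 * t ^ 2 + -∫ τ in c..t, h τ := by
  have hprim : ∀ t, HasDerivAt (fun t => ∫ τ in c..t, h τ) (h t) t := fun t =>
    hh.continuous.integral_hasStrictDerivAt c t |>.hasDerivAt
  have hf' : ∀ t, HasDerivAt (fun t => M / 2 * t ^ 2 + -∫ τ in c..t, h τ) (M * t - h t) t :=
    fun t => (((hasDerivAt_pow 2 t).const_mul (M / 2)).add (hprim t).neg).congr_deriv <| by
      norm_num
      ring
  have hf'' : ∀ t, HasDerivAt (fun t => M * t - h t) (M - deriv h t) t := fun t =>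
    (((hasDerivAt_id' t).const_mul M).sub (hh t).hasDerivAt).congr_deriv (by ring)
  refine convexOn_of_hasDerivWithinAt2_nonneg hD
    (fun t _ => (hf' t).continuousAt.continuousWithinAt)
    (fun t _ => (hf' t).hasDerivWithinAt) (fun t _ => (hf'' t).hasDerivWithinAt)
    fun t ht => sub_nonneg.2 (hM t ht)

theorem ConvexOn.le_add_fderiv {E : Type*} [NormedAddCommGroup E] [NormedSpace ℝ E]
    {s : Set E} {σ : E → ℝ} (hσ : ConvexOn ℝ s σ) {x₀ x : E} (hx₀ : x₀ ∈ s) (hx : x ∈ s)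
    {ℓ : E →L[ℝ] ℝ} (hℓ : HasFDerivAt σ ℓ x₀) :
    σ x₀ + ℓ (x - x₀) ≤ σ x := by
  set φ := σ ∘ AffineMap.lineMap (k := ℝ) x₀ x
  have hφ : ConvexOn ℝ (AffineMap.lineMap (k := ℝ) x₀ x ⁻¹' s) φ := hσ.comp_affineMap _
  have hφ' : HasDerivAt φ (ℓ (x - x₀)) 0 := by
    have hline : HasDerivAt (AffineMap.lineMap (k := ℝ) x₀ x) (x - x₀) 0 :=
      AffineMap.hasDerivAt_lineMap
    rw [← AffineMap.lineMap_apply_zero (k := ℝ) x₀ x] at hℓ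
    exact hℓ.comp_hasDerivAt 0 hline
  have := hφ.le_slope_of_hasDerivAt (by simpa using hx₀) (by simpa using hx) one_pos hφ'
  simp only [φ, slope_def_field, Function.comp_apply, AffineMap.lineMap_apply_one,
    AffineMap.lineMap_apply_zero, sub_zero, div_one] at this
  linarith

section Hopf

variable {n : ℕ}

theorem fenchelDom_nonempty {σ : EuclideanSpace ℝ (Fin n) → ℝ} (hconv : ConvexOn ℝ univ σ)
    {L : NNReal} (hlip : LipschitzWith L σ) : (fenchelDom σ).Nonempty := by
  obtain ⟨x₀, hx₀⟩ : ∃ x₀, DifferentiableAt ℝ σ x₀ :=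
    (hlip.ae_differentiableAt (μ := MeasureTheory.volume)).exists
  set ℓ := fderiv ℝ σ x₀
  refine ⟨(InnerProductSpace.toDual ℝ _).symm ℓ, ℓ x₀ - σ x₀, forall_mem_range.2 fun x => ?_⟩
  have := hconv.le_add_fderiv (mem_univ x₀) (mem_univ x) hx₀.hasFDerivAt
  rw [map_sub] at this
  rw [real_inner_comm, InnerProductSpace.toDual_symm_apply]
  linarith

theorem inner_sub_fenchelConj_le (σ : EuclideanSpace ℝ (Fin n) → ℝ)
    {q : EuclideanSpace ℝ (Fin n)} (hq : q ∈ fenchelDom σ) (x : EuclideanSpace ℝ (Fin n)) :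
    ⟪x, q⟫ - fenchelConj σ q ≤ σ x := by
  have h : ⟪x, q⟫ - σ x ≤ fenchelConj σ q := le_ciSup hq x
  linarith

theorem norm_le_of_mem_fenchelDom {σ : EuclideanSpace ℝ (Fin n) → ℝ} {L : NNReal}
    (hlip : LipschitzWith L σ) {q : EuclideanSpace ℝ (Fin n)} (hq : q ∈ fenchelDom σ) :
    ‖q‖ ≤ L := by
  by_contra! hLq
  obtain ⟨b, hb⟩ := hq
  have hlow : ∀ s : ℝ, 0 ≤ s → s * (‖q‖ * (‖q‖ - L)) - σ 0 ≤ b := fun s hs => by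
    have h₁ := hb (mem_range_self (s • q))
    have h₂ : σ (s • q) ≤ σ 0 + L * ‖s • q‖ := by
      have := hlip.dist_le_mul (s • q) 0
      rw [Real.dist_eq, dist_zero_right] at this
      linarith [le_abs_self (σ (s • q) - σ 0)]
    rw [real_inner_smul_left, real_inner_self_eq_norm_sq] at h₁
    rw [norm_smul, Real.norm_of_nonneg hs] at h₂
    nlinarith
  have hc : 0 < ‖q‖ * (‖q‖ - L) := mul_pos (L.coe_nonneg.trans_lt hLq) (sub_pos.2 hLq)
  obtain ⟨s, hs, hsb⟩ := ((eventually_ge_atTop 0).and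
    ((tendsto_id.atTop_mul_const hc).eventually_gt_atTop (b + σ 0))).exists
  linarith [hlow s hs, show b + σ 0 < s * (‖q‖ * (‖q‖ - L)) from hsb]

noncomputable def hopfTerm (σ : EuclideanSpace ℝ (Fin n) → ℝ)
    (H : ℝ → EuclideanSpace ℝ (Fin n) → ℝ) (q : EuclideanSpace ℝ (Fin n)) (t : ℝ)
    (x : EuclideanSpace ℝ (Fin n)) : ℝ :=
  ⟪x, q⟫ - fenchelConj σ q - ∫ τ in (0:ℝ)..t, H τ q

theorem hopfU_eq_sSup_image (σ : EuclideanSpace ℝ (Fin n) → ℝ)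
    (H : ℝ → EuclideanSpace ℝ (Fin n) → ℝ) (t : ℝ) (x : EuclideanSpace ℝ (Fin n)) :
    hopfU σ H t x = sSup ((fun q => hopfTerm σ H q t x) '' fenchelDom σ) := by
  simp only [hopfU, hopfTerm, Set.image, eq_comm]

theorem bddAbove_hopfTerm_image {σ : EuclideanSpace ℝ (Fin n) → ℝ} {L : NNReal}
    (hlip : LipschitzWith L σ) {H : ℝ → EuclideanSpace ℝ (Fin n) → ℝ}
    (hH : Continuous fun p : ℝ × EuclideanSpace ℝ (Fin n) => H p.1 p.2) (t : ℝ)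
    (x : EuclideanSpace ℝ (Fin n)) :
    BddAbove ((fun q => hopfTerm σ H q t x) '' fenchelDom σ) := by
  have hcont : Continuous fun q => ∫ τ in (0:ℝ)..t, H τ q :=
    intervalIntegral.continuous_parametric_intervalIntegral_of_continuous'
      (f := fun q τ => H τ q) (hH.comp continuous_swap) 0 t
  obtain ⟨m, hm⟩ := (isCompact_closedBall (0 : EuclideanSpace ℝ (Fin n)) L).bddBelow_image
    hcont.continuousOn
  refine ⟨σ x - m, forall_mem_image.2 fun q hq => ?_⟩
  have h₁ := inner_sub_fenchelConj_le σ hq x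
  have h₂ := hm <| mem_image_of_mem _ <|
    mem_closedBall_zero_iff.2 (norm_le_of_mem_fenchelDom hlip hq)
  simp only [hopfTerm]
  linarith

theorem hopfTerm_le_convex_comb_add (σ : EuclideanSpace ℝ (Fin n) → ℝ)
    {H : ℝ → EuclideanSpace ℝ (Fin n) → ℝ} {q : EuclideanSpace ℝ (Fin n)}
    (hHq : Differentiable ℝ fun τ => H τ q) {D : Set ℝ} (hD : Convex ℝ D) {M : ℝ}
    (hM : ∀ τ ∈ interior D, deriv (fun s => H s q) τ ≤ M) {t₁ t₂ : ℝ} (ht₁ : t₁ ∈ D)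
    (ht₂ : t₂ ∈ D) (x₁ x₂ : EuclideanSpace ℝ (Fin n)) {lam : ℝ} (hlam : lam ∈ Icc (0 : ℝ) 1) :
    hopfTerm σ H q (lam * t₁ + (1 - lam) * t₂) (lam • x₁ + (1 - lam) • x₂) ≤
      lam * hopfTerm σ H q t₁ x₁ + (1 - lam) * hopfTerm σ H q t₂ x₂ +
        lam * (1 - lam) * (M / 2) * (t₁ - t₂) ^ 2 := by
  have ht := (convexOn_half_mul_sq_add_neg_integral hD hHq hM 0).le_convex_comb_add_of_mul_sq_add
    ht₁ ht₂ hlam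
  simp only [hopfTerm, inner_add_left, real_inner_smul_left]
  linarith

theorem hopfU_le_convex_comb_add {σ : EuclideanSpace ℝ (Fin n) → ℝ}
    (hconv : ConvexOn ℝ univ σ) {L : NNReal} (hlip : LipschitzWith L σ)
    {H : ℝ → EuclideanSpace ℝ (Fin n) → ℝ}
    (hH : ContDiff ℝ 1 fun p : ℝ × EuclideanSpace ℝ (Fin n) => H p.1 p.2) {T M : ℝ}
    (hM : ∀ τ ∈ Icc (0:ℝ) T, ∀ p ∈ fenchelDom σ, |deriv (fun s => H s p) τ| ≤ M)
    {t₁ t₂ : ℝ} (ht₁ : t₁ ∈ Icc (0:ℝ) T) (ht₂ : t₂ ∈ Icc (0:ℝ) T)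
    (x₁ x₂ : EuclideanSpace ℝ (Fin n)) {lam : ℝ} (hlam : lam ∈ Icc (0 : ℝ) 1) :
    hopfU σ H (lam * t₁ + (1 - lam) * t₂) (lam • x₁ + (1 - lam) • x₂) ≤
      lam * hopfU σ H t₁ x₁ + (1 - lam) * hopfU σ H t₂ x₂ +
        lam * (1 - lam) * M * (t₁ - t₂) ^ 2 := by
  obtain ⟨q₀, hq₀⟩ := fenchelDom_nonempty hconv hlip
  have hM₀ : 0 ≤ M := (abs_nonneg _).trans (hM t₁ ht₁ q₀ hq₀)
  have hd : 0 ≤ lam * (1 - lam) * (t₁ - t₂) ^ 2 :=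
    mul_nonneg (mul_nonneg hlam.1 (sub_nonneg.2 hlam.2)) (sq_nonneg _)
  have hHq : ∀ q, Differentiable ℝ fun τ => H τ q := fun q =>
    (hH.differentiable one_ne_zero).comp (differentiable_id.prodMk (differentiable_const q))
  simp only [hopfU_eq_sSup_image]
  refine csSup_image_le_mul_add_mul_add ⟨q₀, hq₀⟩ (bddAbove_hopfTerm_image hlip hH.continuous _ _)
    (bddAbove_hopfTerm_image hlip hH.continuous _ _) hlam.1 (sub_nonneg.2 hlam.2) fun q hq => ?_
  refine (hopfTerm_le_convex_comb_add σ (hHq q) (convex_Icc 0 T) (M := M) (fun τ hτ => ?_)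
    ht₁ ht₂ x₁ x₂ hlam).trans ?_
  · exact (le_abs_self _).trans (hM τ (interior_subset hτ) q hq)
  · nlinarith [mul_nonneg hM₀ hd]

end Hopf

theorem stmt5_general {n : ℕ} (T : ℝ)
    (σ : EuclideanSpace ℝ (Fin n) → ℝ) (hconv : ConvexOn ℝ Set.univ σ)
    (L : NNReal) (hlip : LipschitzWith L σ)
    (H : ℝ → EuclideanSpace ℝ (Fin n) → ℝ)
    (hH : ContDiff ℝ 1 fun p : ℝ × EuclideanSpace ℝ (Fin n) => H p.1 p.2)
    (M : ℝ)
    (hM : ∀ τ ∈ Set.Icc (0:ℝ) T, ∀ p ∈ fenchelDom σ, |deriv (fun s => H s p) τ| ≤ M) :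
    (∀ y₁ y₂ : ℝ × EuclideanSpace ℝ (Fin n), y₁.1 ∈ Set.Icc (0:ℝ) T →
      y₂.1 ∈ Set.Icc (0:ℝ) T → ∀ lam ∈ Set.Icc (0:ℝ) 1,
      hopfU σ H (lam • y₁ + (1 - lam) • y₂).1 (lam • y₁ + (1 - lam) • y₂).2 ≤
        lam * hopfU σ H y₁.1 y₁.2 + (1 - lam) * hopfU σ H y₂.1 y₂.2 +
          lam * (1 - lam) * M * |y₁.1 - y₂.1| ^ 2) ∧
    (∃ C > 0, ∀ y₁ y₂ : ℝ × EuclideanSpace ℝ (Fin n), y₁.1 ∈ Set.Icc (0:ℝ) T →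
      y₂.1 ∈ Set.Icc (0:ℝ) T → ∀ lam ∈ Set.Icc (0:ℝ) 1,
      hopfU σ H (lam • y₁ + (1 - lam) • y₂).1 (lam • y₁ + (1 - lam) • y₂).2 -
          lam * hopfU σ H y₁.1 y₁.2 - (1 - lam) * hopfU σ H y₂.1 y₂.2 ≤
        lam * (1 - lam) * (C / 2) * ‖y₁ - y₂‖ ^ 2) := by
  have main : ∀ y₁ y₂ : ℝ × EuclideanSpace ℝ (Fin n), y₁.1 ∈ Set.Icc (0:ℝ) T →
      y₂.1 ∈ Set.Icc (0:ℝ) T → ∀ lam ∈ Set.Icc (0:ℝ) 1,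
      hopfU σ H (lam • y₁ + (1 - lam) • y₂).1 (lam • y₁ + (1 - lam) • y₂).2 ≤
        lam * hopfU σ H y₁.1 y₁.2 + (1 - lam) * hopfU σ H y₂.1 y₂.2 +
          lam * (1 - lam) * M * |y₁.1 - y₂.1| ^ 2 := by
    rintro ⟨t₁, x₁⟩ ⟨t₂, x₂⟩ ht₁ ht₂ lam hlam
    simpa [sq_abs] using hopfU_le_convex_comb_add hconv hlip hH hM ht₁ ht₂ x₁ x₂ hlam
  refine ⟨main, 2 * max M 1, by positivity, fun y₁ y₂ ht₁ ht₂ lam hlam => ?_⟩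
  have hΔ : |y₁.1 - y₂.1| ≤ ‖y₁ - y₂‖ := norm_fst_le (y₁ - y₂)
  have hlam' : 0 ≤ lam * (1 - lam) := mul_nonneg hlam.1 (sub_nonneg.2 hlam.2)
  calc _ ≤ lam * (1 - lam) * M * |y₁.1 - y₂.1| ^ 2 := by
        linarith [main y₁ y₂ ht₁ ht₂ lam hlam]
    _ ≤ lam * (1 - lam) * (2 * max M 1 / 2) * ‖y₁ - y₂‖ ^ 2 := by
        rw [mul_div_cancel_left₀ _ two_ne_zero]
        gcongr
        exact le_max_left M 1

/-- Semiconvexity of the Hopf-type formula: the solution satisfies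
`u(λy₁+(1−λ)y₂) ≤ λu(y₁)+(1−λ)u(y₂)+λ(1−λ)M|t₁−t₂|²` where `M` bounds `|H_t|`
on `[0,T] × dom σ*`; in particular `u` is semiconvex with linear modulus. -/
theorem stmt5 {n : ℕ} (T : ℝ) (hT : 0 < T)
    (σ : EuclideanSpace ℝ (Fin n) → ℝ) (hconv : ConvexOn ℝ Set.univ σ)
    (L : NNReal) (hlip : LipschitzWith L σ)
    (H : ℝ → EuclideanSpace ℝ (Fin n) → ℝ)
    (hH : ContDiff ℝ 1 fun p : ℝ × EuclideanSpace ℝ (Fin n) => H p.1 p.2)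
    (M : ℝ)
    (hM : ∀ τ ∈ Set.Icc (0:ℝ) T, ∀ p ∈ fenchelDom σ, |deriv (fun s => H s p) τ| ≤ M) :
    (∀ y₁ y₂ : ℝ × EuclideanSpace ℝ (Fin n), y₁.1 ∈ Set.Icc (0:ℝ) T →
      y₂.1 ∈ Set.Icc (0:ℝ) T → ∀ lam ∈ Set.Icc (0:ℝ) 1,
      hopfU σ H (lam • y₁ + (1 - lam) • y₂).1 (lam • y₁ + (1 - lam) • y₂).2 ≤
        lam * hopfU σ H y₁.1 y₁.2 + (1 - lam) * hopfU σ H y₂.1 y₂.2 +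
          lam * (1 - lam) * M * |y₁.1 - y₂.1| ^ 2) ∧
    (∃ C > 0, ∀ y₁ y₂ : ℝ × EuclideanSpace ℝ (Fin n), y₁.1 ∈ Set.Icc (0:ℝ) T →
      y₂.1 ∈ Set.Icc (0:ℝ) T → ∀ lam ∈ Set.Icc (0:ℝ) 1,
      hopfU σ H (lam • y₁ + (1 - lam) • y₂).1 (lam • y₁ + (1 - lam) • y₂).2 -
          lam * hopfU σ H y₁.1 y₁.2 - (1 - lam) * hopfU σ H y₂.1 y₂.2 ≤
        lam * (1 - lam) * (C / 2) * ‖y₁ - y₂‖ ^ 2) :=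
  stmt5_general T σ hconv L hlip H hH M hM
end

section
/- Let u₁, u₂ be real-valued functions and M > 0, and suppose: (a) on each of the regions t ≤ t₊ and t ≥ t₊ separately, u satisfies u(λ y₁ + (1−λ) y₂) ≤ λ u(y₁) + (1−λ) u(y₂) + λ(1−λ) M |t₁ − t₂|² whenever both points lie in that region; (b) the same inequality holds whenever t₁ ≤ λ t₁ + (1−λ)t₂ ≤ t₊ ≤ t₂. Then for points with t₁ ≤ t₊ ≤ λ t₁ + (1−λ) t₂ ≤ t₂, one has u(λ y₁ + (1−λ) y₂) ≤ λ u(y₁) + (1−λ) u(y₂) + 2 λ(1−λ) M |t₁ − t₂|². In particular, u is semiconvex with constant 4M on the whole strip. -/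
/-- Gluing semiconvexity estimates across the splitting time `t₊`:
if the estimate with constant `M` holds when both points are on the same side
of `t₊`, and when the intermediate point `t₀` lies before `t₊` (`t₁ ≤ t₀ ≤ t₊ ≤ t₂`),
then for `t₁ ≤ t₊ ≤ t₀ ≤ t₂` the estimate holds with constant `2M`; in particular
`u` is semiconvex with constant `4M` on the whole strip. -/
theorem stmt6 {n : ℕ} (T tp M : ℝ) (hT : 0 < tp) (hpT : tp < T) (hM : 0 < M)
    (u : ℝ × EuclideanSpace ℝ (Fin n) → ℝ)
    (ha : ∀ y₁ y₂ : ℝ × EuclideanSpace ℝ (Fin n), y₁.1 ∈ Set.Icc (0:ℝ) T →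
      y₂.1 ∈ Set.Icc (0:ℝ) T → ∀ lam ∈ Set.Icc (0:ℝ) 1,
      ((y₁.1 ≤ tp ∧ y₂.1 ≤ tp) ∨ (tp ≤ y₁.1 ∧ tp ≤ y₂.1)) →
      u (lam • y₁ + (1 - lam) • y₂) ≤
        lam * u y₁ + (1 - lam) * u y₂ + lam * (1 - lam) * M * |y₁.1 - y₂.1| ^ 2)
    (hb : ∀ y₁ y₂ : ℝ × EuclideanSpace ℝ (Fin n), y₁.1 ∈ Set.Icc (0:ℝ) T →
      y₂.1 ∈ Set.Icc (0:ℝ) T → ∀ lam ∈ Set.Icc (0:ℝ) 1,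
      (y₁.1 ≤ lam * y₁.1 + (1 - lam) * y₂.1 ∧
        lam * y₁.1 + (1 - lam) * y₂.1 ≤ tp ∧ tp ≤ y₂.1) →
      u (lam • y₁ + (1 - lam) • y₂) ≤
        lam * u y₁ + (1 - lam) * u y₂ + lam * (1 - lam) * M * |y₁.1 - y₂.1| ^ 2) :
    (∀ y₁ y₂ : ℝ × EuclideanSpace ℝ (Fin n), y₁.1 ∈ Set.Icc (0:ℝ) T →
      y₂.1 ∈ Set.Icc (0:ℝ) T → ∀ lam ∈ Set.Icc (0:ℝ) 1,
      (y₁.1 ≤ tp ∧ tp ≤ lam * y₁.1 + (1 - lam) * y₂.1 ∧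
        lam * y₁.1 + (1 - lam) * y₂.1 ≤ y₂.1) →
      u (lam • y₁ + (1 - lam) • y₂) ≤
        lam * u y₁ + (1 - lam) * u y₂ + 2 * lam * (1 - lam) * M * |y₁.1 - y₂.1| ^ 2) ∧
    (∀ y₁ y₂ : ℝ × EuclideanSpace ℝ (Fin n), y₁.1 ∈ Set.Icc (0:ℝ) T →
      y₂.1 ∈ Set.Icc (0:ℝ) T → y₁.1 ≤ y₂.1 → ∀ lam ∈ Set.Icc (0:ℝ) 1,
      u (lam • y₁ + (1 - lam) • y₂) - lam * u y₁ - (1 - lam) * u y₂ ≤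
        lam * (1 - lam) * (4 * M / 2) * ‖y₁ - y₂‖ ^ 2) := by
  have part1 : (∀ y₁ y₂ : ℝ × EuclideanSpace ℝ (Fin n), y₁.1 ∈ Set.Icc (0:ℝ) T →
      y₂.1 ∈ Set.Icc (0:ℝ) T → ∀ lam ∈ Set.Icc (0:ℝ) 1,
      (y₁.1 ≤ tp ∧ tp ≤ lam * y₁.1 + (1 - lam) * y₂.1 ∧
        lam * y₁.1 + (1 - lam) * y₂.1 ≤ y₂.1) →
      u (lam • y₁ + (1 - lam) • y₂) ≤
        lam * u y₁ + (1 - lam) * u y₂ + 2 * lam * (1 - lam) * M * |y₁.1 - y₂.1| ^ 2) := by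
    intro y₁ y₂ h1 h2 lam hlam hcond
    obtain ⟨hA, hB, hC⟩ := hcond
    obtain ⟨hl0, hl1⟩ := hlam
    by_cases hdeg : lam * (y₂.1 - y₁.1) = 0
    · rcases mul_eq_zero.1 hdeg with h | h
      · subst h
        simpa using le_of_eq rfl
      · -- y₂.1 = y₁.1, all times equal tp
        have ht : y₂.1 = y₁.1 := by linarith [sub_eq_zero.1 h]
        have hmid : lam * y₁.1 + (1 - lam) * y₂.1 = y₁.1 := by rw [ht]; ring
        have htp1 : tp ≤ y₁.1 := by rw [hmid] at hB; exact hB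
        have key := ha y₁ y₂ h1 h2 lam ⟨hl0, hl1⟩ (Or.inr ⟨htp1, by rw [ht]; exact htp1⟩)
        have habs : |y₁.1 - y₂.1| = 0 := by rw [ht]; simp
        rw [habs] at key ⊢
        nlinarith [key]
    · have hlam_pos : 0 < lam := by
        rcases lt_or_eq_of_le hl0 with h | h
        · exact h
        · exact absurd (by rw [← h]; ring) hdeg
      have h12 : y₁.1 < y₂.1 := by
        rcases lt_or_eq_of_le (show y₁.1 ≤ y₂.1 by linarith) with h | h
        · exact h
        · exact absurd (by rw [h]; ring) hdeg
      have htp2 : tp < y₂.1 := by nlinarith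
      set θ : ℝ := (y₂.1 - tp) / (y₂.1 - y₁.1) with hθdef
      set μ : ℝ := (y₂.1 - (lam * y₁.1 + (1 - lam) * y₂.1)) / (y₂.1 - tp) with hμdef
      have h21 : y₂.1 - y₁.1 ≠ 0 := by linarith
      have h2p : y₂.1 - tp ≠ 0 := by linarith
      have hθ0 : 0 ≤ θ := div_nonneg (by linarith) (by linarith)
      have hθ1 : θ ≤ 1 := by rw [hθdef, div_le_one (by linarith)]; linarith
      have hμ0 : 0 ≤ μ := div_nonneg (by linarith) (by linarith)
      have hμ1 : μ ≤ 1 := by rw [hμdef, div_le_one (by linarith)]; linarith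
      have hμθ : μ * θ = lam := by
        rw [hθdef, hμdef]; field_simp; ring
      set z : ℝ × EuclideanSpace ℝ (Fin n) := θ • y₁ + (1 - θ) • y₂ with hzdef
      have hmid : θ * y₁.1 + (1 - θ) * y₂.1 = tp := by
        rw [hθdef]; field_simp; ring
      have hz1 : z.1 = tp := by
        rw [hzdef]
        show θ • y₁.1 + (1 - θ) • y₂.1 = tp
        simpa [smul_eq_mul] using hmid
      have hzIcc : z.1 ∈ Set.Icc (0:ℝ) T := by
        rw [hz1]; exact ⟨hT.le, hpT.le⟩
      have hu_z := hb y₁ y₂ h1 h2 θ ⟨hθ0, hθ1⟩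
        ⟨by rw [hmid]; exact hA, by rw [hmid], by linarith⟩
      have hu0 := ha z y₂ hzIcc h2 μ ⟨hμ0, hμ1⟩
        (Or.inr ⟨by rw [hz1], by linarith⟩)
      have hvec : μ • z + (1 - μ) • y₂ = lam • y₁ + (1 - lam) • y₂ := by
        rw [hzdef]
        rw [smul_add, smul_smul, smul_smul, hμθ]
        rw [add_assoc, ← add_smul]
        have hc : μ * (1 - θ) + (1 - μ) = 1 - lam := by rw [← hμθ]; ring
        rw [hc]
      have habs1 : |z.1 - y₂.1| ^ 2 = (tp - y₂.1) ^ 2 := by rw [hz1, sq_abs]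
      have habs2 : |y₁.1 - y₂.1| ^ 2 = (y₁.1 - y₂.1) ^ 2 := sq_abs _
      rw [habs1] at hu0
      rw [habs2] at hu_z
      have hd : tp - y₂.1 = θ * (y₁.1 - y₂.1) := by
        rw [hθdef]; field_simp; ring
      have hmul := mul_le_mul_of_nonneg_left hu_z hμ0
      have hkey : μ * (θ * u y₁ + (1 - θ) * u y₂ + θ * (1 - θ) * M * (y₁.1 - y₂.1) ^ 2)
          + (1 - μ) * u y₂ + μ * (1 - μ) * M * (tp - y₂.1) ^ 2
          = lam * u y₁ + (1 - lam) * u y₂ + lam * (1 - lam) * M * (y₁.1 - y₂.1) ^ 2 := by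
        rw [hd, ← hμθ]; ring
      have hfin : u (lam • y₁ + (1 - lam) • y₂) ≤
          lam * u y₁ + (1 - lam) * u y₂ + lam * (1 - lam) * M * (y₁.1 - y₂.1) ^ 2 := by
        rw [← hvec]
        calc u (μ • z + (1 - μ) • y₂)
            ≤ μ * u z + (1 - μ) * u y₂ + μ * (1 - μ) * M * (tp - y₂.1) ^ 2 := hu0
          _ ≤ μ * (θ * u y₁ + (1 - θ) * u y₂ + θ * (1 - θ) * M * (y₁.1 - y₂.1) ^ 2)
              + (1 - μ) * u y₂ + μ * (1 - μ) * M * (tp - y₂.1) ^ 2 := by linarith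
          _ = lam * u y₁ + (1 - lam) * u y₂ + lam * (1 - lam) * M * (y₁.1 - y₂.1) ^ 2 :=
              hkey
      rw [habs2]
      have hpos : (0:ℝ) ≤ lam * (1 - lam) * M * (y₁.1 - y₂.1) ^ 2 :=
        mul_nonneg (mul_nonneg (mul_nonneg hl0 (by linarith)) hM.le)
          (sq_nonneg _)
      linarith [hfin, hpos]
  refine ⟨part1, ?_⟩
  intro y₁ y₂ h1 h2 h12 lam hlam
  obtain ⟨hl0, hl1⟩ := hlam
  have hnorm : |y₁.1 - y₂.1| ≤ ‖y₁ - y₂‖ := by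
    simpa using norm_fst_le (y₁ - y₂)
  have hnorm2 : |y₁.1 - y₂.1| ^ 2 ≤ ‖y₁ - y₂‖ ^ 2 :=
    pow_le_pow_left₀ (abs_nonneg _) hnorm 2
  have hll : (0:ℝ) ≤ lam * (1 - lam) := mul_nonneg hl0 (by linarith)
  have hbase : u (lam • y₁ + (1 - lam) • y₂) ≤
      lam * u y₁ + (1 - lam) * u y₂ + 2 * lam * (1 - lam) * M * |y₁.1 - y₂.1| ^ 2 := by
    have hpos : (0:ℝ) ≤ lam * (1 - lam) * M * |y₁.1 - y₂.1| ^ 2 :=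
      mul_nonneg (mul_nonneg hll hM.le) (sq_nonneg _)
    by_cases hc2 : y₂.1 ≤ tp
    · have := ha y₁ y₂ h1 h2 lam ⟨hl0, hl1⟩ (Or.inl ⟨le_trans h12 hc2, hc2⟩)
      linarith [this, hpos]
    · push_neg at hc2
      by_cases hc1 : tp ≤ y₁.1
      · have := ha y₁ y₂ h1 h2 lam ⟨hl0, hl1⟩ (Or.inr ⟨hc1, hc2.le⟩)
        linarith [this, hpos]
      · push_neg at hc1
        have hmidle : y₁.1 ≤ lam * y₁.1 + (1 - lam) * y₂.1 := by nlinarith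
        have hmidge : lam * y₁.1 + (1 - lam) * y₂.1 ≤ y₂.1 := by nlinarith
        by_cases hmid : lam * y₁.1 + (1 - lam) * y₂.1 ≤ tp
        · have := hb y₁ y₂ h1 h2 lam ⟨hl0, hl1⟩ ⟨hmidle, hmid, hc2.le⟩
          linarith [this, hpos]
        · push_neg at hmid
          exact part1 y₁ y₂ h1 h2 lam ⟨hl0, hl1⟩ ⟨hc1.le, hmid.le, hmidge⟩
  have h2M : lam * (1 - lam) * (4 * M / 2) * ‖y₁ - y₂‖ ^ 2
      = 2 * lam * (1 - lam) * M * ‖y₁ - y₂‖ ^ 2 := by ring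
  have hmul := mul_le_mul_of_nonneg_left hnorm2
    (mul_nonneg (by linarith : (0:ℝ) ≤ 2 * (lam * (1 - lam))) hM.le)
  rw [h2M]
  linarith [hbase, hmul]
end

section
/- Let t₁ < t₊ ≤ t₀ ≤ t₂, λ = (t₂−t₀)/(t₂−t₁) ∈ [0,1], μ = (t₂−t₀)/(t₂−t₊), α = (t₀−t₊)/(t₀−t₁). Then λ(1−α)|t₀−t₁|² + μ(1−λ)|t₂−t₊|² ≤ 2 λ(1−λ) |t₂−t₁|². -/
/-!
After clearing denominators both sides are multiples of `(t₂ - t₀) * (t₀ - t₁) ≥ 0`: the two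
terms on the left carry the factors `t₊ - t₁` and `t₂ - t₊` over `t₂ - t₁`, so they add up to
exactly `(t₂ - t₀) * (t₀ - t₁)`, while `λ (1 - λ) (t₂ - t₁)² = (t₂ - t₀) * (t₀ - t₁)`.
-/

section Field

variable {K : Type*} [Field K]

/-- Also true for `b = 0`, where both sides vanish; this covers the degenerate case `t₊ = t₂`. -/
theorem div_mul_mul_sq_self (a b c : K) : a / b * c * b ^ 2 = a * c * b := by
  rcases eq_or_ne b 0 with rfl | hb
  · simp
  · field_simp

theorem weight_mul_one_sub_weight_mul_sq (t₁ t₀ t₂ : K) (h₂ : t₂ ≠ t₁) :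
    (t₂ - t₀) / (t₂ - t₁) * (1 - (t₂ - t₀) / (t₂ - t₁)) * (t₂ - t₁) ^ 2 =
      (t₂ - t₀) * (t₀ - t₁) := by
  have : t₂ - t₁ ≠ 0 := sub_ne_zero.2 h₂
  field_simp
  ring

theorem interpolation_sum_eq (t₁ tp t₀ t₂ : K) (h₀ : t₀ ≠ t₁) (h₂ : t₂ ≠ t₁) :
    (t₂ - t₀) / (t₂ - t₁) * (1 - (t₀ - tp) / (t₀ - t₁)) * (t₀ - t₁) ^ 2 +
        (t₂ - t₀) / (t₂ - tp) * (1 - (t₂ - t₀) / (t₂ - t₁)) * (t₂ - tp) ^ 2 =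
      (t₂ - t₀) * (t₀ - t₁) := by
  have : t₀ - t₁ ≠ 0 := sub_ne_zero.2 h₀
  have : t₂ - t₁ ≠ 0 := sub_ne_zero.2 h₂
  rw [div_mul_mul_sq_self]
  field_simp
  ring

end Field

/-- With `λ = (t₂−t₀)/(t₂−t₁)`, `μ = (t₂−t₀)/(t₂−t₊)`, `α = (t₀−t₊)/(t₀−t₁)` and
`t₁ < t₊ ≤ t₀ ≤ t₂`, one has `λ(1−α)|t₀−t₁|² + μ(1−λ)|t₂−t₊|² ≤ 2λ(1−λ)|t₂−t₁|²`. -/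
theorem stmt8 (t₁ tp t₀ t₂ : ℝ) (h1 : t₁ < tp) (h2 : tp ≤ t₀) (h3 : t₀ ≤ t₂) :
    ((t₂ - t₀) / (t₂ - t₁)) * (1 - (t₀ - tp) / (t₀ - t₁)) * |t₀ - t₁| ^ 2 +
        ((t₂ - t₀) / (t₂ - tp)) * (1 - (t₂ - t₀) / (t₂ - t₁)) * |t₂ - tp| ^ 2 ≤
      2 * ((t₂ - t₀) / (t₂ - t₁)) * (1 - (t₂ - t₀) / (t₂ - t₁)) * |t₂ - t₁| ^ 2 := by
  have h₀ : t₀ ≠ t₁ := (h1.trans_le h2).ne'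
  have h₂ : t₂ ≠ t₁ := (h1.trans_le (h2.trans h3)).ne'
  have hprod : 0 ≤ (t₂ - t₀) * (t₀ - t₁) :=
    mul_nonneg (sub_nonneg.2 h3) (sub_nonneg.2 (h1.trans_le h2).le)
  simp only [sq_abs]
  rw [interpolation_sum_eq t₁ tp t₀ t₂ h₀ h₂, mul_assoc 2, mul_assoc 2,
    weight_mul_one_sub_weight_mul_sq t₁ t₀ t₂ h₂]
  linarith
end
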